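/- Let ν : [0,∞) → [0,∞) be continuous and non-decreasing, let η : [0,∞) → [0,∞) be continuous, and let N ∈ ℕ be such that |ν(t_1) − ν(t_2)| ≤ η(t_2)(1 + |t_1 − t_2|)^N for all t_1, t_2 ≥ 0. Extend ν radially to ℝ^d by ν(x) = ν(|x|) and define ν̃(z) = π^{−d/2} ∫_{ℝ^d} ν(x) e^{−(z−x)·(z−x)} dx for z ∈ ℂ^d. Then ν̃ is an entire function on ℂ^d and, with A = π^{−d/2} ∫_{ℝ^d} (1+|x|)^N e^{−|x|²} dx, one has |ν̃(z) − ν(Re z)| ≤ A e^{|Im z|²} η(|Re z|) for all z ∈ ℂ^d. -/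

import Mathlib

/-!
Expanding the square, the kernel `e^{-(z-x)·(z-x)}` has modulus `e^{|Im z|² - |Re z - x|²}`,
and its integral over `ℝ^d` is `π^{d/2}` for every `z`: it is `e^{-z·z}` times the Gaussian
integral of `e^{-|x|² + 2z·x}`, which is `π^{d/2} e^{z·z}`. The hypothesis at `t₂ = 0` gives
`ν` polynomial growth, which the Gaussian decay dominates locally uniformly in `z`, so one may
differentiate under the integral sign. For the estimate, the normalisation turns
`ν̃(z) - ν(|Re z|)` into `π^{-d/2}` times the integral of `(ν(|x|) - ν(|Re z|)) e^{-(z-x)·(z-x)}`,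
which the hypothesis and `||x| - |Re z|| ≤ |x - Re z|` bound by
`η(|Re z|) e^{|Im z|²} ∫ (1 + |x - Re z|)^N e^{-|x - Re z|²} dx`; translating `x` gives `A`.
-/

open Filter MeasureTheory
open scoped BigOperators

noncomputable section

abbrev Rd (d : ℕ) := EuclideanSpace ℝ (Fin d)

abbrev Cd (d : ℕ) := EuclideanSpace ℂ (Fin d)

/-- Embedding of `ℝ^d` into `ℂ^d`. -/
def toCd {d : ℕ} (x : Rd d) : Cd d := WithLp.toLp 2 (fun j => (x j : ℂ))

/-- Real part of a point of `ℂ^d`. -/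
def reP {d : ℕ} (z : Cd d) : Rd d := WithLp.toLp 2 (fun j => (z j).re)

/-- Imaginary part of a point of `ℂ^d`. -/
def imP {d : ℕ} (z : Cd d) : Rd d := WithLp.toLp 2 (fun j => (z j).im)

/-- Gaussian regularization `ν̃(z) = π^{-d/2} ∫_{ℝ^d} ν(|x|) e^{-(z-x)·(z-x)} dx`. -/
def nuTilde {d : ℕ} (ν : ℝ → ℝ) (z : Cd d) : ℂ :=
  ((Real.pi ^ (-(d : ℝ)/2) : ℝ) : ℂ) *
    ∫ x : Rd d, (ν ‖x‖ : ℂ) * Complex.exp (- ∑ j, ((z j) - ((x j : ℝ) : ℂ))^2)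

open Real

section GaussianMoments

variable {V : Type*} [NormedAddCommGroup V] [InnerProductSpace ℝ V] [FiniteDimensional ℝ V]
  [MeasurableSpace V] [BorelSpace V]

lemma integrable_exp_neg_mul_sq_norm {b : ℝ} (hb : 0 < b) :
    Integrable (fun x : V => rexp (-b * ‖x‖ ^ 2)) := by
  refine (GaussianFourier.integrable_cexp_neg_mul_sq_norm_add (V := V) (b := b)
    (by simpa using hb) 0 0).norm.congr (Eventually.of_forall fun x => ?_)
  simp [Complex.norm_exp, ← Complex.ofReal_pow]

lemma one_add_pow_mul_exp_neg_mul_sq_le (k : ℕ) {b t : ℝ} (hb : 0 < b) (ht : 0 ≤ t) :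
    (1 + t) ^ k * rexp (-b * t ^ 2) ≤ rexp (k ^ 2 / (2 * b)) * rexp (-(b / 2) * t ^ 2) := by
  have hpow : (1 + t) ^ k ≤ rexp (k * t) := by
    rw [Real.exp_nat_mul]
    exact pow_le_pow_left₀ (by linarith) (by linarith [add_one_le_exp t]) k
  have hsq : k * t - b / 2 * t ^ 2 ≤ k ^ 2 / (2 * b) := by
    rw [le_div_iff₀ (by positivity)]
    nlinarith [sq_nonneg ((k : ℝ) - b * t)]
  calc (1 + t) ^ k * rexp (-b * t ^ 2) ≤ rexp (k * t) * rexp (-b * t ^ 2) := by gcongr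
    _ ≤ rexp (k ^ 2 / (2 * b)) * rexp (-(b / 2) * t ^ 2) := by
      rw [← Real.exp_add, ← Real.exp_add, exp_le_exp]
      linarith

lemma integrable_one_add_norm_pow_mul_exp_neg_mul_sq (k : ℕ) {b : ℝ} (hb : 0 < b) :
    Integrable (fun x : V => (1 + ‖x‖) ^ k * rexp (-b * ‖x‖ ^ 2)) := by
  refine ((integrable_exp_neg_mul_sq_norm (half_pos hb)).const_mul
    (rexp (k ^ 2 / (2 * b)))).mono' (by fun_prop) (Eventually.of_forall fun x => ?_)
  rw [Real.norm_of_nonneg (by positivity)]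
  exact one_add_pow_mul_exp_neg_mul_sq_le k hb (norm_nonneg x)

end GaussianMoments

def gaussKernel {d : ℕ} (z : Cd d) (x : Rd d) : ℂ :=
  Complex.exp (-∑ j, (z j - (x j : ℂ)) ^ 2)

section GaussKernel

variable {d : ℕ}

lemma norm_reP_sq_add_norm_imP_sq (z : Cd d) : ‖reP z‖ ^ 2 + ‖imP z‖ ^ 2 = ‖z‖ ^ 2 := by
  simp only [EuclideanSpace.real_norm_sq_eq, EuclideanSpace.norm_sq_eq, ← Finset.sum_add_distrib,
    Complex.sq_norm, Complex.normSq_apply, reP, imP]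
  simp [sq]

lemma re_sum_sub_sq (z : Cd d) (x : Rd d) :
    (∑ j, (z j - (x j : ℂ)) ^ 2).re = ‖reP z - x‖ ^ 2 - ‖imP z‖ ^ 2 := by
  simp only [EuclideanSpace.real_norm_sq_eq, ← Finset.sum_sub_distrib, Complex.re_sum]
  simp [reP, imP, sq]

lemma norm_gaussKernel (z : Cd d) (x : Rd d) :
    ‖gaussKernel z x‖ = rexp (‖imP z‖ ^ 2 - ‖reP z - x‖ ^ 2) := by
  rw [gaussKernel, Complex.norm_exp, Complex.neg_re, re_sum_sub_sq, neg_sub]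

lemma norm_gaussKernel_le (z : Cd d) (x : Rd d) :
    ‖gaussKernel z x‖ ≤ rexp (‖z‖ ^ 2) * rexp (-(1 / 2) * ‖x‖ ^ 2) := by
  rw [norm_gaussKernel, ← Real.exp_add, exp_le_exp, ← norm_reP_sq_add_norm_imP_sq]
  have hx : ‖x‖ ≤ ‖reP z - x‖ + ‖reP z‖ := by
    simpa using norm_sub_le (reP z - x) (reP z)
  nlinarith [mul_self_le_mul_self (norm_nonneg x) hx, sq_nonneg (‖reP z - x‖ - ‖reP z‖)]

lemma integral_gaussKernel (z : Cd d) : ∫ x, gaussKernel z x = ((π ^ ((d : ℝ) / 2) : ℝ) : ℂ) := by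
  rw [← (PiLp.volume_preserving_toLp (Fin d)).integral_comp
    (MeasurableEquiv.toLp 2 _).measurableEmbedding]
  have hexpand : ∀ v : Fin d → ℝ, gaussKernel z (WithLp.toLp 2 v) =
      Complex.exp (-1 * ∑ j, (v j : ℂ) ^ 2 + ∑ j, 2 * z j * v j) * Complex.exp (-∑ j, z j ^ 2) := by
    intro v
    rw [gaussKernel, ← Complex.exp_add]
    congr 1
    simp only [sub_sq, Finset.sum_add_distrib, Finset.sum_sub_distrib]
    ring
  have hcancel : (∑ j, (2 * z j) ^ 2) / (4 * (1 : ℂ)) + -∑ j, z j ^ 2 = 0 := by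
    simp only [mul_pow, ← Finset.mul_sum]
    ring
  simp_rw [hexpand]
  rw [integral_mul_const, GaussianFourier.integral_cexp_neg_mul_sum_add (by simp), mul_assoc,
    ← Complex.exp_add, hcancel, Complex.exp_zero, mul_one, Complex.ofReal_cpow pi_nonneg]
  simp

lemma continuous_gaussKernel (z : Cd d) : Continuous (gaussKernel z) := by
  unfold gaussKernel; fun_prop

def gaussKernelFDeriv (z : Cd d) (x : Rd d) : Cd d →L[ℂ] ℂ :=
  gaussKernel z x • -∑ j, (2 * (z j - x j)) • (EuclideanSpace.proj j : Cd d →L[ℂ] ℂ)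

lemma hasFDerivAt_gaussKernel (z : Cd d) (x : Rd d) :
    HasFDerivAt (gaussKernel · x) (gaussKernelFDeriv z x) z := by
  have hsq : ∀ j, HasFDerivAt (fun w : Cd d => (w j - x j) ^ 2)
      ((2 * (z j - x j)) • (EuclideanSpace.proj j : Cd d →L[ℂ] ℂ)) z := fun j => by
    have h : HasDerivAt (fun u : ℂ => (u - x j) ^ 2) (2 * (z j - x j)) (z j) := by
      simpa using ((hasDerivAt_id (z j)).sub_const (x j : ℂ)).fun_pow 2
    exact h.comp_hasFDerivAt z (EuclideanSpace.proj j : Cd d →L[ℂ] ℂ).hasFDerivAt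
  exact (HasFDerivAt.fun_sum fun j _ => hsq j).neg.cexp

lemma continuous_gaussKernelFDeriv (z : Cd d) : Continuous (gaussKernelFDeriv z) := by
  unfold gaussKernelFDeriv
  exact (continuous_gaussKernel z).smul (by fun_prop)

lemma norm_gaussKernelFDeriv_le (z : Cd d) (x : Rd d) :
    ‖gaussKernelFDeriv z x‖ ≤ 2 * d * (‖z‖ + ‖x‖) * ‖gaussKernel z x‖ := by
  have hterm : ∀ j, ‖(2 * (z j - x j)) • (EuclideanSpace.proj j : Cd d →L[ℂ] ℂ)‖ ≤
      2 * (‖z‖ + ‖x‖) := fun j => by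
    have hproj : ‖(EuclideanSpace.proj j : Cd d →L[ℂ] ℂ)‖ ≤ 1 :=
      ContinuousLinearMap.opNorm_le_bound _ zero_le_one fun w => by
        simpa using PiLp.norm_apply_le w j
    have hcoord : ‖z j - x j‖ ≤ ‖z‖ + ‖x‖ := (norm_sub_le _ _).trans <| add_le_add
      (PiLp.norm_apply_le z j) (by simpa using PiLp.norm_apply_le x j)
    calc _ ≤ ‖2 * (z j - x j)‖ * 1 := by rw [norm_smul]; gcongr
      _ ≤ 2 * (‖z‖ + ‖x‖) := by simpa using hcoord
  calc ‖gaussKernelFDeriv z x‖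
      ≤ ‖gaussKernel z x‖ * ∑ j : Fin d, 2 * (‖z‖ + ‖x‖) := by
        rw [gaussKernelFDeriv, norm_smul, norm_neg]
        gcongr
        exact (norm_sum_le _ _).trans (Finset.sum_le_sum fun j _ => hterm j)
    _ = 2 * d * (‖z‖ + ‖x‖) * ‖gaussKernel z x‖ := by simp; ring

end GaussKernel

section GaussTransform

variable {d N : ℕ} {f : Rd d → ℂ} {C : ℝ}

lemma norm_mul_gaussKernel_le (hf : ∀ x, ‖f x‖ ≤ C * (1 + ‖x‖) ^ N) (z : Cd d) (x : Rd d) :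
    ‖f x * gaussKernel z x‖ ≤ C * rexp (‖z‖ ^ 2) * ((1 + ‖x‖) ^ N * rexp (-(1 / 2) * ‖x‖ ^ 2)) := by
  rw [norm_mul]
  calc ‖f x‖ * ‖gaussKernel z x‖
      ≤ C * (1 + ‖x‖) ^ N * (rexp (‖z‖ ^ 2) * rexp (-(1 / 2) * ‖x‖ ^ 2)) :=
        mul_le_mul (hf x) (norm_gaussKernel_le z x) (norm_nonneg _) ((norm_nonneg _).trans (hf x))
    _ = _ := by ring

lemma integrable_mul_gaussKernel (hfm : AEStronglyMeasurable f)
    (hf : ∀ x, ‖f x‖ ≤ C * (1 + ‖x‖) ^ N) (z : Cd d) :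
    Integrable (fun x => f x * gaussKernel z x) :=
  ((integrable_one_add_norm_pow_mul_exp_neg_mul_sq N one_half_pos).const_mul _).mono'
    (hfm.mul (continuous_gaussKernel z).aestronglyMeasurable)
    (Eventually.of_forall (norm_mul_gaussKernel_le hf z))

lemma differentiable_integral_mul_gaussKernel (hfm : AEStronglyMeasurable f)
    (hf : ∀ x, ‖f x‖ ≤ C * (1 + ‖x‖) ^ N) :
    Differentiable ℂ fun z => ∫ x, f x * gaussKernel z x := by
  intro z₀
  set R := ‖z₀‖ + 1
  have hR : 1 ≤ R := by simp [R]
  have hC : 0 ≤ C := by simpa using (norm_nonneg _).trans (hf 0)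
  have hball : ∀ z ∈ Metric.ball z₀ 1, ‖z‖ ≤ R := fun z hz => by
    have := norm_le_norm_add_norm_sub' z z₀
    rw [Metric.mem_ball, dist_eq_norm] at hz
    simp only [R]; linarith
  have hbound : ∀ x, ∀ z ∈ Metric.ball z₀ 1, ‖f x • gaussKernelFDeriv z x‖ ≤
      2 * d * R * C * rexp (R ^ 2) * ((1 + ‖x‖) ^ (N + 1) * rexp (-(1 / 2) * ‖x‖ ^ 2)) := by
    intro x z hz
    have hzx : ‖z‖ + ‖x‖ ≤ R * (1 + ‖x‖) := by
      nlinarith [hball z hz, norm_nonneg x]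
    calc ‖f x • gaussKernelFDeriv z x‖
        ≤ ‖f x‖ * (2 * d * (‖z‖ + ‖x‖) * ‖gaussKernel z x‖) := by
          rw [norm_smul]; gcongr; exact norm_gaussKernelFDeriv_le z x
      _ = 2 * d * (‖z‖ + ‖x‖) * ‖f x * gaussKernel z x‖ := by rw [norm_mul]; ring
      _ ≤ 2 * d * (R * (1 + ‖x‖)) *
          (C * rexp (R ^ 2) * ((1 + ‖x‖) ^ N * rexp (-(1 / 2) * ‖x‖ ^ 2))) := by
          gcongr
          refine (norm_mul_gaussKernel_le hf z x).trans ?_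
          gcongr
          exact hball z hz
      _ = _ := by ring
  exact (hasFDerivAt_integral_of_dominated_of_fderiv_le (Metric.ball_mem_nhds z₀ one_pos)
    (Eventually.of_forall fun z => hfm.mul (continuous_gaussKernel z).aestronglyMeasurable)
    (integrable_mul_gaussKernel hfm hf z₀)
    (hfm.smul (continuous_gaussKernelFDeriv z₀).aestronglyMeasurable)
    (Eventually.of_forall hbound)
    ((integrable_one_add_norm_pow_mul_exp_neg_mul_sq (N + 1) one_half_pos).const_mul _)
    (Eventually.of_forall fun x z _ =>
      (hasFDerivAt_gaussKernel z x).const_mul (f x))).differentiableAt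

def gaussTransform (f : Rd d → ℂ) (z : Cd d) : ℂ :=
  ((π ^ (-(d : ℝ) / 2) : ℝ) : ℂ) * ∫ x, f x * gaussKernel z x

lemma differentiable_gaussTransform (hfm : AEStronglyMeasurable f)
    (hf : ∀ x, ‖f x‖ ≤ C * (1 + ‖x‖) ^ N) : Differentiable ℂ (gaussTransform f) :=
  (differentiable_integral_mul_gaussKernel hfm hf).const_mul _

lemma gaussTransform_sub_apply_reP (z : Cd d)
    (hg : Integrable fun x => (f x - f (reP z)) * gaussKernel z x) :
    gaussTransform f z - f (reP z) =
      ((π ^ (-(d : ℝ) / 2) : ℝ) : ℂ) * ∫ x, (f x - f (reP z)) * gaussKernel z x := by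
  have hK : Integrable (gaussKernel z) := by
    simpa using integrable_mul_gaussKernel (f := fun _ => 1) (C := 1) (N := 0)
      aestronglyMeasurable_const (by simp) z
  have hnormalize : ((π ^ (-(d : ℝ) / 2) : ℝ) : ℂ) * ∫ x, gaussKernel z x = 1 := by
    rw [integral_gaussKernel, ← Complex.ofReal_mul, ← rpow_add pi_pos, neg_div, neg_add_cancel,
      rpow_zero, Complex.ofReal_one]
  have hsplit : ∫ x, f x * gaussKernel z x =
      (∫ x, (f x - f (reP z)) * gaussKernel z x) + f (reP z) * ∫ x, gaussKernel z x := by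
    rw [← integral_const_mul, ← integral_add hg (hK.const_mul _)]
    congr 1 with x
    ring
  rw [gaussTransform, hsplit, mul_add, mul_left_comm, hnormalize, mul_one, add_sub_cancel_right]

lemma norm_gaussTransform_sub_le (hfm : AEStronglyMeasurable f) {c : ℝ} (z : Cd d)
    (hf : ∀ x, ‖f x - f (reP z)‖ ≤ c * (1 + ‖x - reP z‖) ^ N) :
    ‖gaussTransform f z - f (reP z)‖ ≤
      (π ^ (-(d : ℝ) / 2) * ∫ x : Rd d, (1 + ‖x‖) ^ N * rexp (-‖x‖ ^ 2)) *
        rexp (‖imP z‖ ^ 2) * c := by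
  set a := reP z
  have hdom : ∀ x, ‖(f x - f a) * gaussKernel z x‖ ≤
      c * rexp (‖imP z‖ ^ 2) * ((1 + ‖x - a‖) ^ N * rexp (-‖x - a‖ ^ 2)) := fun x => by
    rw [norm_mul, norm_gaussKernel, norm_sub_rev a x, sub_eq_add_neg (‖imP z‖ ^ 2), Real.exp_add]
    calc _ ≤ c * (1 + ‖x - a‖) ^ N * (rexp (‖imP z‖ ^ 2) * rexp (-‖x - a‖ ^ 2)) := by
          gcongr; exact hf x
      _ = _ := by ring
  have hshift : Integrable fun x => (1 + ‖x - a‖) ^ N * rexp (-‖x - a‖ ^ 2) := by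
    simpa using
      (integrable_one_add_norm_pow_mul_exp_neg_mul_sq (V := Rd d) N one_pos).comp_sub_right a
  have hg : Integrable fun x => (f x - f a) * gaussKernel z x :=
    (hshift.const_mul _).mono' ((hfm.sub aestronglyMeasurable_const).mul
      (continuous_gaussKernel z).aestronglyMeasurable) (Eventually.of_forall hdom)
  calc ‖gaussTransform f z - f a‖
      = π ^ (-(d : ℝ) / 2) * ‖∫ x, (f x - f a) * gaussKernel z x‖ := by
        rw [gaussTransform_sub_apply_reP z hg, norm_mul, Complex.norm_real,
          norm_of_nonneg (by positivity)]
    _ ≤ π ^ (-(d : ℝ) / 2) *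
        ∫ x, c * rexp (‖imP z‖ ^ 2) * ((1 + ‖x - a‖) ^ N * rexp (-‖x - a‖ ^ 2)) := by
        gcongr
        exact norm_integral_le_of_norm_le (hshift.const_mul _) (Eventually.of_forall hdom)
    _ = _ := by
        rw [integral_const_mul,
          integral_sub_right_eq_self (fun x : Rd d => (1 + ‖x‖) ^ N * rexp (-‖x‖ ^ 2)) a]
        ring

end GaussTransform

lemma abs_comp_norm_sub_le {E : Type*} [SeminormedAddCommGroup E] {ν η : ℝ → ℝ} {N : ℕ}
    (hest : ∀ t₁ t₂ : ℝ, 0 ≤ t₁ → 0 ≤ t₂ → |ν t₁ - ν t₂| ≤ η t₂ * (1 + |t₁ - t₂|) ^ N)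
    (x a : E) : |ν ‖x‖ - ν ‖a‖| ≤ η ‖a‖ * (1 + ‖x - a‖) ^ N := by
  have hη : 0 ≤ η ‖a‖ := by simpa using hest ‖a‖ ‖a‖ (norm_nonneg a) (norm_nonneg a)
  refine (hest _ _ (norm_nonneg x) (norm_nonneg a)).trans ?_
  gcongr
  exact abs_norm_sub_norm_le x a

theorem stmt4_general {d : ℕ} (ν η : ℝ → ℝ) (N : ℕ)
    (hνc : ContinuousOn ν (Set.Ici 0))
    (hest : ∀ t₁ t₂ : ℝ, 0 ≤ t₁ → 0 ≤ t₂ →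
      |ν t₁ - ν t₂| ≤ η t₂ * (1 + |t₁ - t₂|) ^ N) :
    Differentiable ℂ (nuTilde (d := d) ν) ∧
    ∀ z : Cd d,
      ‖nuTilde ν z - (ν ‖reP z‖ : ℝ)‖ ≤
        (Real.pi ^ (-(d : ℝ)/2) * ∫ x : Rd d, (1 + ‖x‖) ^ N * Real.exp (-‖x‖^2)) *
          Real.exp (‖imP z‖^2) * η ‖reP z‖ := by
  have hν : nuTilde ν = gaussTransform (fun x : Rd d => (ν ‖x‖ : ℂ)) := rfl
  have hνm : AEStronglyMeasurable fun x : Rd d => (ν ‖x‖ : ℂ) :=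
    (Complex.continuous_ofReal.comp
      (hνc.comp_continuous continuous_norm norm_nonneg)).aestronglyMeasurable
  have hprofile : ∀ x a : Rd d, ‖(ν ‖x‖ : ℂ) - (ν ‖a‖ : ℂ)‖ ≤ η ‖a‖ * (1 + ‖x - a‖) ^ N :=
    fun x a => by
      rw [← Complex.ofReal_sub, Complex.norm_real, Real.norm_eq_abs]
      exact abs_comp_norm_sub_le hest x a
  have hgrowth : ∀ x : Rd d, ‖(ν ‖x‖ : ℂ)‖ ≤ (|ν 0| + η 0) * (1 + ‖x‖) ^ N := fun x => by
    have h := abs_comp_norm_sub_le hest x (0 : Rd d)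
    have hη : 0 ≤ η 0 := by simpa using hest 0 0 le_rfl le_rfl
    have hpow : 1 ≤ (1 + ‖x‖) ^ N := one_le_pow₀ (by simp)
    rw [norm_zero, sub_zero] at h
    rw [Complex.norm_real, Real.norm_eq_abs]
    nlinarith [abs_sub_abs_le_abs_sub (ν ‖x‖) (ν 0), abs_nonneg (ν 0)]
  rw [hν]
  exact ⟨differentiable_gaussTransform hνm hgrowth,
    fun z => norm_gaussTransform_sub_le hνm z fun x => hprofile x (reP z)⟩

/-- The Gaussian regularization of a radially extended weight is entire and stays close
to `ν(Re z)` (part of the proof of Proposition 6.2). -/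
theorem stmt4 {d : ℕ} (ν η : ℝ → ℝ) (N : ℕ)
    (hνc : ContinuousOn ν (Set.Ici 0)) (hνmono : MonotoneOn ν (Set.Ici 0))
    (hνpos : ∀ t : ℝ, 0 ≤ t → 0 ≤ ν t)
    (hηc : ContinuousOn η (Set.Ici 0)) (hηpos : ∀ t : ℝ, 0 ≤ t → 0 ≤ η t)
    (hest : ∀ t₁ t₂ : ℝ, 0 ≤ t₁ → 0 ≤ t₂ →
      |ν t₁ - ν t₂| ≤ η t₂ * (1 + |t₁ - t₂|) ^ N) :
    Differentiable ℂ (nuTilde (d := d) ν) ∧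
    ∀ z : Cd d,
      ‖nuTilde ν z - (ν ‖reP z‖ : ℝ)‖ ≤
        (Real.pi ^ (-(d : ℝ)/2) * ∫ x : Rd d, (1 + ‖x‖) ^ N * Real.exp (-‖x‖^2)) *
          Real.exp (‖imP z‖^2) * η ‖reP z‖ :=
  stmt4_general ν η N hνc hest
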